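/- If v : ℝ → ℝ is such that v² is absolutely continuous on [a,b] and v is continuous and nonvanishing on [a,b], then v is absolutely continuous on [a,b]; without the nonvanishing assumption, there exists v with v² absolutely continuous but v not absolutely continuous. -/

import Mathlib

/-- A function is absolutely continuous on `[a, b]` in the classical ε-δ sense. -/
def AbsolutelyContinuousOn (f : ℝ → ℝ) (a b : ℝ) : Prop :=
  ∀ ε > (0:ℝ), ∃ δ > (0:ℝ), ∀ (n : ℕ) (u v : Fin n → ℝ),
    (∀ i, a ≤ u i ∧ u i ≤ v i ∧ v i ≤ b) →
    (∀ i j, i ≠ j → Disjoint (Set.Ioo (u i) (v i)) (Set.Ioo (u j) (v j))) →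
    (∑ i, (v i - u i)) < δ → (∑ i, |f (v i) - f (u i)|) < ε

/-!
If `v` is continuous and nonvanishing on `[a, b]`, it has constant sign and `|v| ≥ c > 0` there,
so `|v x - v y| = |v x ^ 2 - v y ^ 2| / (|v x| + |v y|) ≤ |v x ^ 2 - v y ^ 2| / (2 c)` and absolute
continuity passes from `v ^ 2` to `v`.

Without nonvanishing, take `w = √(infDist · {1 / (n + 1)})`. Its square is `1`-Lipschitz, but on the
intervals from `1 / (n + 2)` to the midpoint of `[1 / (n + 2), 1 / (n + 1)]` the lengths
`≈ 1 / (2 n²)` are summable while the increments of `w`, `≈ 1 / (2 n)`, are not.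
-/

open Set Metric Filter Function

namespace AbsolutelyContinuousOn

variable {f g : ℝ → ℝ} {a b : ℝ}

theorem of_abs_sub_le (hg : AbsolutelyContinuousOn g a b) (K : ℝ)
    (h : ∀ x ∈ Icc a b, ∀ y ∈ Icc a b, |f x - f y| ≤ K * |g x - g y|) :
    AbsolutelyContinuousOn f a b := by
  intro ε hε
  obtain ⟨δ, hδ, H⟩ := hg (ε / (|K| + 1)) (by positivity)
  refine ⟨δ, hδ, fun n u v hmem hdisj hlen => ?_⟩
  have hmem' : ∀ i, v i ∈ Icc a b ∧ u i ∈ Icc a b := fun i =>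
    have ⟨hau, huv, hvb⟩ := hmem i
    ⟨⟨hau.trans huv, hvb⟩, ⟨hau, huv.trans hvb⟩⟩
  calc ∑ i, |f (v i) - f (u i)|
      ≤ ∑ i, (|K| + 1) * |g (v i) - g (u i)| := by
        gcongr with i
        exact (h _ (hmem' i).1 _ (hmem' i).2).trans
          (mul_le_mul_of_nonneg_right ((le_abs_self K).trans (le_add_of_nonneg_right zero_le_one))
            (abs_nonneg _))
    _ = (|K| + 1) * ∑ i, |g (v i) - g (u i)| := (Finset.mul_sum ..).symm
    _ < (|K| + 1) * (ε / (|K| + 1)) := by gcongr; exact H n u v hmem hdisj hlen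
    _ = ε := mul_div_cancel₀ _ (by positivity)

end AbsolutelyContinuousOn

theorem absolutelyContinuousOn_id (a b : ℝ) : AbsolutelyContinuousOn id a b := fun ε hε =>
  ⟨ε, hε, fun n u v hmem _ hlen => by
    simpa [abs_of_nonneg (sub_nonneg.2 (hmem _).2.1)] using hlen⟩

theorem LipschitzOnWith.absolutelyContinuousOn {f : ℝ → ℝ} {K : NNReal} {a b : ℝ}
    (hf : LipschitzOnWith K f (Icc a b)) : AbsolutelyContinuousOn f a b :=
  (absolutelyContinuousOn_id a b).of_abs_sub_le K fun x hx y hy => by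
    simpa only [Real.dist_eq, id] using hf.dist_le_mul x hx y hy

theorem AbsolutelyContinuousOn.of_sq_of_ne_zero {v : ℝ → ℝ} {a b : ℝ}
    (hv : ContinuousOn v (Icc a b)) (hnz : ∀ t ∈ Icc a b, v t ≠ 0)
    (hsq : AbsolutelyContinuousOn (fun t => v t ^ 2) a b) : AbsolutelyContinuousOn v a b := by
  obtain ⟨C, hC⟩ := isCompact_Icc.exists_bound_of_continuousOn (hv.inv₀ hnz)
  have hsign := isPreconnected_Icc.eq_or_eq_neg_of_sq_eq hv hv.abs
    (fun t _ => by simp only [Pi.pow_apply, sq_abs]) fun ht => abs_ne_zero.2 (hnz _ ht)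
  refine hsq.of_abs_sub_le (C / 2) fun x hx y hy => ?_
  have habs : |v x + v y| = |v x| + |v y| := by
    refine (abs_add_eq_add_abs_iff _ _).2 ?_
    rcases hsign with h | h
    · exact Or.inl ⟨(abs_nonneg _).trans_eq (h hx).symm, (abs_nonneg _).trans_eq (h hy).symm⟩
    · exact Or.inr ⟨(h hx).trans_le (neg_nonpos.2 (abs_nonneg _)),
        (h hy).trans_le (neg_nonpos.2 (abs_nonneg _))⟩
  have hlow : ∀ t ∈ Icc a b, 1 ≤ C * |v t| := fun t ht =>
    (inv_le_iff_one_le_mul₀ (abs_pos.2 (hnz t ht))).1 (by simpa using hC t ht)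
  calc |v x - v y|
      ≤ |v x - v y| * (C * (|v x| + |v y|) / 2) :=
        le_mul_of_one_le_right (abs_nonneg _) (by linarith [hlow x hx, hlow y hy])
    _ = C / 2 * (|v x - v y| * |v x + v y|) := by rw [habs]; ring
    _ = C / 2 * |v x ^ 2 - v y ^ 2| := by rw [← abs_mul]; ring_nf

theorem not_absolutelyContinuousOn_of_not_summable {f : ℝ → ℝ} {a b : ℝ} (u v : ℕ → ℝ)
    (hmem : ∀ i, a ≤ u i ∧ u i ≤ v i ∧ v i ≤ b)
    (hdisj : Pairwise (Disjoint on fun i => Ioo (u i) (v i)))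
    (hlen : Summable fun i => v i - u i)
    (hvar : ¬ Summable fun i => |f (v i) - f (u i)|) :
    ¬ AbsolutelyContinuousOn f a b := by
  intro hf
  obtain ⟨δ, hδ, H⟩ := hf 1 one_pos
  obtain ⟨N, hN⟩ := ((tendsto_sum_nat_add fun i => v i - u i).eventually (gt_mem_nhds hδ)).exists
  have hvar_tail : Tendsto (fun k => ∑ i ∈ Finset.range k, |f (v (i + N)) - f (u (i + N))|)
      atTop atTop :=
    (not_summable_iff_tendsto_nat_atTop_of_nonneg fun _ => abs_nonneg _).1
      (by rwa [summable_nat_add_iff N (f := fun i => |f (v i) - f (u i)|)])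
  obtain ⟨k, hk⟩ := (hvar_tail.eventually_ge_atTop 1).exists
  refine (H k (fun i => u (i + N)) (fun i => v (i + N)) (fun i => hmem _) ?_ ?_).not_ge ?_
  · intro i j hij
    exact hdisj fun h => hij (Fin.ext (Nat.add_right_cancel h))
  · rw [Fin.sum_univ_eq_sum_range (fun i => v (i + N) - u (i + N))]
    refine lt_of_le_of_lt (Summable.sum_le_tsum _ (fun i _ => sub_nonneg.2 (hmem _).2.1) ?_) hN
    exact (summable_nat_add_iff N).2 hlen
  · rwa [Fin.sum_univ_eq_sum_range (fun i => |f (v (i + N)) - f (u (i + N))|)]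

theorem Antitone.summable_sub_succ {x : ℕ → ℝ} (hx : Antitone x) (hbdd : BddBelow (range x)) :
    Summable fun n => x n - x (n + 1) := by
  obtain ⟨m, hm⟩ := hbdd
  refine summable_of_sum_range_le (c := x 0 - m) (fun n => sub_nonneg.2 (hx n.le_succ)) fun k => ?_
  rw [Finset.sum_range_sub']
  linarith [hm (mem_range_self k)]

theorem Antitone.sub_div_two_le_infDist_range {x : ℕ → ℝ} (hx : Antitone x) (n : ℕ) :
    (x n - x (n + 1)) / 2 ≤ infDist ((x (n + 1) + x n) / 2) (range x) := by
  rw [le_infDist (range_nonempty x)]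
  rintro _ ⟨k, rfl⟩
  rw [Real.dist_eq, le_abs]
  rcases le_or_gt k n with hk | hk
  · have := hx hk; right; linarith
  · have := hx (Nat.succ_le_of_lt hk); left; linarith

theorem not_absolutelyContinuousOn_sqrt_infDist_inv_succ :
    ¬ AbsolutelyContinuousOn (fun t => √(infDist t (range fun n : ℕ => ((n : ℝ) + 1)⁻¹))) 0 1 := by
  set x : ℕ → ℝ := fun n => ((n : ℝ) + 1)⁻¹
  have hx : Antitone x := fun m n h => by simp only [x]; gcongr
  have hpos : ∀ n, 0 < x n := fun n => by positivity
  refine not_absolutelyContinuousOn_of_not_summable (fun n => x (n + 1))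
    (fun n => (x (n + 1) + x n) / 2) (fun n => ?_) ?_ ?_ ?_
  · have h1 := hx n.le_succ
    have h0 : x n ≤ 1 := by simpa [x] using hx n.zero_le
    exact ⟨(hpos _).le, by linarith, by linarith⟩
  · have hmid : ∀ n, (x (n + 1) + x n) / 2 ≤ x n := fun n => by linarith [hx n.le_succ]
    exact hx.pairwise_disjoint_on_Ioo_succ.mono fun i j h =>
      h.mono (Ioo_subset_Ioo_right (hmid i)) (Ioo_subset_Ioo_right (hmid j))
  · exact ((hx.summable_sub_succ ⟨0, by rintro _ ⟨n, rfl⟩; exact (hpos n).le⟩).div_const 2).congr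
      fun n => by ring
  · have hzero : ∀ n, √(infDist (x (n + 1)) (range x)) = 0 := fun n => by
      rw [infDist_zero_of_mem (mem_range_self _), Real.sqrt_zero]
    have hgap : ∀ n, x n - x (n + 1) = x n * x (n + 1) := fun n => by
      simp only [x]; push_cast; field_simp; ring
    have hlow : ∀ n, x (n + 1) / 2 ≤ √(infDist ((x (n + 1) + x n) / 2) (range x)) := fun n => by
      rw [Real.le_sqrt (by linarith [hpos (n + 1)]) infDist_nonneg]
      refine le_trans ?_ (hx.sub_div_two_le_infDist_range n)
      nlinarith [hgap n, hx n.le_succ, hpos (n + 1)]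
    have hdiv : ¬ Summable fun n => x (n + 1) / 2 := by
      have hharm : ¬ Summable fun n : ℕ => ((n + 2 : ℕ) : ℝ)⁻¹ :=
        (summable_nat_add_iff 2 (f := fun n : ℕ => (n : ℝ)⁻¹)).not.2 Real.not_summable_natCast_inv
      rw [summable_div_const_iff two_ne_zero]
      refine fun h => hharm (h.congr fun n => ?_)
      simp only [x]; push_cast; ring
    refine fun hs => hdiv (hs.of_nonneg_of_le (fun n => by positivity) fun n => ?_)
    rw [hzero, sub_zero, abs_of_nonneg (Real.sqrt_nonneg _)]
    exact hlow n

theorem stmt_8_general (a b : ℝ) (v : ℝ → ℝ)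
    (hv : ContinuousOn v (Set.Icc a b))
    (hnz : ∀ t ∈ Set.Icc a b, v t ≠ 0)
    (hAC : AbsolutelyContinuousOn (fun t => (v t) ^ 2) a b) :
    AbsolutelyContinuousOn v a b ∧
    (∃ w : ℝ → ℝ, ContinuousOn w (Set.Icc 0 1) ∧
      AbsolutelyContinuousOn (fun t => (w t) ^ 2) 0 1 ∧
      ¬ AbsolutelyContinuousOn w 0 1) := by
  refine ⟨AbsolutelyContinuousOn.of_sq_of_ne_zero hv hnz hAC, ?_⟩
  set S := range fun n : ℕ => ((n : ℝ) + 1)⁻¹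
  refine ⟨fun t => √(infDist t S), ?_, ?_, not_absolutelyContinuousOn_sqrt_infDist_inv_succ⟩
  · exact (Real.continuous_sqrt.comp (continuous_infDist_pt S)).continuousOn
  · simp only [Real.sq_sqrt infDist_nonneg]
    exact (lipschitz_infDist_pt S).lipschitzOnWith.absolutelyContinuousOn

theorem stmt_8 (a b : ℝ) (hab : a ≤ b) (v : ℝ → ℝ)
    (hv : ContinuousOn v (Set.Icc a b))
    (hnz : ∀ t ∈ Set.Icc a b, v t ≠ 0)
    (hAC : AbsolutelyContinuousOn (fun t => (v t) ^ 2) a b) :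
    AbsolutelyContinuousOn v a b ∧
    (∃ w : ℝ → ℝ, ContinuousOn w (Set.Icc 0 1) ∧
      AbsolutelyContinuousOn (fun t => (w t) ^ 2) 0 1 ∧
      ¬ AbsolutelyContinuousOn w 0 1) :=
  stmt_8_general a b v hv hnz hAC
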